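/- Let $p$ be an odd prime, $d$ an odd prime with $d \ne p$, $g = (d-1)/2$, and let $H$ be the $g \times g$ Hasse–Witt matrix over $\mathbb{F}_p$ of the curve $y^2 = x^d + 1$, i.e., $H_{i,j} = c_{pi-j}$ where $(x^d+1)^{(p-1)/2} = \sum_k c_k x^k$ in $\mathbb{F}_p[x]$. Then $H$ is invertible if $p \equiv 1 \pmod d$, and $H$ is nilpotent if $p \not\equiv 1 \pmod d$ and $g$ is prime. -/

import Mathlib

/-!
A nonzero entry `H i j` forces `d ∣ p * i - j`, i.e. `j ≡ p * i (mod d)`, since only powers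
`x ^ (d * m)` occur in `(x ^ d + 1) ^ ((p - 1) / 2)`, with coefficient `choose ((p - 1) / 2) m`.

If `p ≡ 1 (mod d)` this makes `H` diagonal, and the diagonal entries are binomial coefficients
below `p`, hence units. Otherwise a nonzero entry of `H ^ g` in row `i` gives a chain
`i, p * i, …, p ^ g * i (mod d)` inside the half system `{1, …, g}` of `(ℤ/d)ˣ`. As the half
system meets its negative trivially, `-1` is not a power of `p`, so `p` has odd order dividing
`2 * g`, i.e. order `g`. The orbit of `i` then fills the half system, which therefore is the group
of powers of `p`; but it contains `2` and `g`, hence `2 * g = -1`.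
-/

open Polynomial

theorem Polynomial.coeff_X_pow_add_one_pow {R : Type*} [CommSemiring R] {d : ℕ} (hd : 0 < d)
    (n k : ℕ) :
    ((X ^ d + 1 : R[X]) ^ n).coeff k = if d ∣ k then (n.choose (k / d) : R) else 0 := by
  have hexpand : (X ^ d + 1 : R[X]) ^ n = expand R d ((X + 1) ^ n) := by simp
  rw [hexpand, coeff_expand hd, coeff_X_add_one_pow]

theorem ZMod.natCast_choose_ne_zero {p n k : ℕ} [hp : Fact p.Prime] (hn : n < p) (hk : k ≤ n) :
    (n.choose k : ZMod p) ≠ 0 := by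
  rw [Ne, ZMod.natCast_eq_zero_iff]
  intro hdvd
  have hfac : n.choose k ∣ n.factorial :=
    Dvd.intro _ (by rw [← mul_assoc]; exact Nat.choose_mul_factorial_mul_factorial hk)
  exact absurd ((hp.out.dvd_factorial).1 (hdvd.trans hfac)) (by omega)

theorem int_dvd_of_ne_zero_of_eq_coeff {R : Type*} [CommSemiring R] {d n : ℕ} {c : ℤ → R}
    (hd : 0 < d) (hc : ∀ k : ℕ, c k = ((X ^ d + 1 : R[X]) ^ n).coeff k)
    (hcneg : ∀ k : ℤ, k < 0 → c k = 0)
    {k : ℤ} (hk : c k ≠ 0) : (d : ℤ) ∣ k := by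
  rcases lt_or_ge k 0 with hk0 | hk0
  · exact absurd (hcneg k hk0) hk
  lift k to ℕ using hk0
  rw [hc, coeff_X_pow_add_one_pow hd] at hk
  split_ifs at hk with hdk
  · exact Int.natCast_dvd_natCast.2 hdk
  · exact absurd rfl hk

theorem apply_mul_sub_ne_zero_of_modEq_one {p d g : ℕ} [hp : Fact p.Prime] (hdg : d = 2 * g + 1)
    (h1 : p ≡ 1 [MOD d]) {c : ℤ → ZMod p}
    (hc : ∀ k : ℕ, c k = ((X ^ d + 1 : (ZMod p)[X]) ^ ((p - 1) / 2)).coeff k)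
    {k : ℕ} (hk : k ≤ g) : c (p * k - k) ≠ 0 := by
  have hd : 0 < d := by omega
  obtain ⟨q, hq⟩ : d ∣ p - 1 := (Nat.modEq_iff_dvd' hp.out.one_le).1 h1.symm
  have hpq : p = d * q + 1 := by rw [← hq, Nat.sub_add_cancel hp.out.one_le]
  have harg : (p * k - k : ℤ) = ((d * (q * k) : ℕ) : ℤ) := by rw [hpq]; push_cast; ring
  have hqk : q * k ≤ (p - 1) / 2 := by
    rw [Nat.le_div_iff_mul_le two_pos, hq, hdg]
    nlinarith [Nat.mul_le_mul_left q hk]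
  rw [harg, hc, coeff_X_pow_add_one_pow hd, if_pos (dvd_mul_right _ _),
    Nat.mul_div_cancel_left _ hd]
  exact ZMod.natCast_choose_ne_zero (by omega) hqk

/-- The indices `1, …, g` of the Hasse–Witt matrix, read modulo `d`. -/
def halfSystem (d g : ℕ) (i : Fin g) : ZMod d := ((i : ℕ) + 1 : ℕ)

section HalfSystem

variable {d g : ℕ}

theorem halfSystem_injective (hgd : g < d) : Function.Injective (halfSystem d g) := by
  intro a b hab
  have hval := congrArg ZMod.val hab
  simp only [halfSystem] at hval
  rw [ZMod.val_natCast_of_lt (by omega), ZMod.val_natCast_of_lt (by omega)] at hval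
  exact Fin.ext (by omega)

theorem halfSystem_add_ne_zero (hgd : 2 * g < d) (i j : Fin g) :
    halfSystem d g i + halfSystem d g j ≠ 0 := by
  rw [halfSystem, halfSystem, ← Nat.cast_add, Ne, ZMod.natCast_eq_zero_iff]
  intro hdvd
  have := Nat.le_of_dvd (by omega) hdvd
  omega

theorem halfSystem_eq_mul_of_dvd {p : ℕ} {i j : Fin g}
    (h : (d : ℤ) ∣ p * (i.val + 1) - (j.val + 1)) :
    halfSystem d g j = p * halfSystem d g i := by
  have h0 := (ZMod.intCast_zmod_eq_zero_iff_dvd _ d).2 h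
  push_cast at h0
  simp only [halfSystem]
  push_cast
  linear_combination -h0

theorem two_mul_natCast_eq_neg_one (hdg : d = 2 * g + 1) : (2 * g : ZMod d) = -1 := by
  have h : ((2 * g + 1 : ℕ) : ZMod d) = 0 := hdg ▸ ZMod.natCast_self d
  push_cast at h
  linear_combination h

end HalfSystem

namespace Matrix

variable {ι α R : Type*} [Fintype ι]

theorem exists_ne_zero_of_mul_apply_ne_zero {l n : Type*} [NonUnitalNonAssocSemiring R]
    {A : Matrix l ι R} {B : Matrix ι n R} {i : l} {j : n} (h : (A * B) i j ≠ 0) :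
    ∃ k, A i k ≠ 0 ∧ B k j ≠ 0 := by
  obtain ⟨k, -, hk⟩ := Finset.exists_ne_zero_of_sum_ne_zero h
  exact ⟨k, left_ne_zero_of_mul hk, right_ne_zero_of_mul hk⟩

variable [DecidableEq ι]

theorem isUnit_of_isDiag {K : Type*} [Field K] {H : Matrix ι ι K} (hdiag : H.IsDiag)
    (h : ∀ i, H i i ≠ 0) : IsUnit H := by
  rw [← hdiag.diagonal_diag, isUnit_diagonal, Pi.isUnit_iff]
  exact fun i => (h i).isUnit

variable [Semiring R] {H : Matrix ι ι R} {s : ι → α} {φ : α → α}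

theorem iterate_mem_range_of_pow_apply_ne_zero (hH : ∀ i j, H i j ≠ 0 → s j = φ (s i))
    {n : ℕ} {i j : ι} (h : (H ^ n) i j ≠ 0) {l : ℕ} (hl : l ≤ n) :
    φ^[l] (s i) ∈ Set.range s := by
  induction n generalizing i l with
  | zero =>
    obtain rfl : l = 0 := by omega
    exact ⟨i, rfl⟩
  | succ n ih =>
    rw [pow_succ'] at h
    obtain ⟨k, hik, hkj⟩ := exists_ne_zero_of_mul_apply_ne_zero h
    cases l with
    | zero => exact ⟨i, rfl⟩
    | succ l =>
      rw [Function.iterate_succ_apply, ← hH i k hik]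
      exact ih hkj (by omega)

theorem pow_eq_zero_of_forall_exists_iterate_notMem (hH : ∀ i j, H i j ≠ 0 → s j = φ (s i))
    {n : ℕ} (h : ∀ i, ∃ l ≤ n, φ^[l] (s i) ∉ Set.range s) : H ^ n = 0 := by
  ext i j
  by_contra hij
  obtain ⟨l, hl, hnotMem⟩ := h i
  exact hnotMem (iterate_mem_range_of_pow_apply_ne_zero hH hij hl)

end Matrix

theorem pow_orderOf_div_two_eq_neg_one {R : Type*} [CommRing R] [NoZeroDivisors R] {x : R}
    (heven : Even (orderOf x)) (hx : orderOf x ≠ 0) : x ^ (orderOf x / 2) = -1 := by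
  refine IsPrimitiveRoot.eq_neg_one_of_two_right ?_
  have hhalf : orderOf x / 2 ≠ 0 := by obtain ⟨r, hr⟩ := heven; omega
  have h := (IsPrimitiveRoot.orderOf x).pow_of_dvd hhalf (Nat.div_dvd_of_dvd heven.two_dvd)
  rwa [Nat.div_div_self heven.two_dvd hx] at h

section HalfSystemOrbits

variable {d g : ℕ} [Fact d.Prime]

theorem exists_pow_mul_eq_of_orderOf_eq (hgd : g < d) {q u : ZMod d} (hu : u ≠ 0)
    (he : orderOf q = g) (hS : ∀ l, q ^ l * u ∈ Set.range (halfSystem d g))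
    {x : ZMod d} (hx : x ∈ Set.range (halfSystem d g)) : ∃ l, q ^ l * u = x := by
  have horbit : Set.range (fun l : Fin g => q ^ (l : ℕ) * u) = Set.range (halfSystem d g) := by
    refine Set.eq_of_subset_of_ncard_le ?_ ?_ (Set.finite_range _)
    · rintro _ ⟨l, rfl⟩
      exact hS l
    · rw [Set.ncard_range_of_injective (halfSystem_injective hgd), Set.ncard_range_of_injective]
      intro a b hab
      exact Fin.ext (pow_injOn_Iio_orderOf (by simp [he]) (by simp [he])
        (mul_right_cancel₀ hu hab))
  obtain ⟨l, rfl⟩ := horbit ▸ hx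
  exact ⟨l, rfl⟩

theorem not_forall_pow_mul_mem_halfSystem (hdg : d = 2 * g + 1) (hg : 2 ≤ g) {q u : ZMod d}
    (hu : u ≠ 0) (he : orderOf q = g) : ¬ ∀ l, q ^ l * u ∈ Set.range (halfSystem d g) := by
  intro hS
  have hgd : g < d := by omega
  have hmem : ∀ k : ℕ, 1 ≤ k → k ≤ g → (k : ZMod d) ∈ Set.range (halfSystem d g) :=
    fun k hk1 hkg => ⟨⟨k - 1, by omega⟩, by simp [halfSystem, Nat.sub_add_cancel hk1]⟩
  obtain ⟨t, ht⟩ := exists_pow_mul_eq_of_orderOf_eq hgd hu he hS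
    (by simpa using hmem 1 le_rfl (by omega))
  have hpow : ∀ l, q ^ l * 1 ∈ Set.range (halfSystem d g) := fun l => by
    simpa [pow_add, mul_assoc, ht] using hS (l + t)
  obtain ⟨a, ha⟩ := exists_pow_mul_eq_of_orderOf_eq hgd one_ne_zero he hpow
    (by simpa using hmem 2 (by omega) hg)
  obtain ⟨b, hb⟩ := exists_pow_mul_eq_of_orderOf_eq hgd one_ne_zero he hpow
    (hmem g (by omega) le_rfl)
  obtain ⟨j, hj⟩ := hpow (a + b)
  apply halfSystem_add_ne_zero (d := d) (by omega) j ⟨0, by omega⟩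
  rw [hj, pow_add, mul_one, ← mul_one (q ^ a), ← mul_one (q ^ b), ha, hb,
    two_mul_natCast_eq_neg_one hdg]
  simp [halfSystem]

theorem exists_pow_mul_halfSystem_notMem (hdg : d = 2 * g + 1) (hg : g.Prime) {q : ZMod d}
    (hq0 : q ≠ 0) (hq1 : q ≠ 1) (i : Fin g) :
    ∃ l ≤ g, q ^ l * halfSystem d g i ∉ Set.range (halfSystem d g) := by
  by_contra! hS
  have hg2 := hg.two_le
  have hgd : 2 * g < d := by omega
  have hu : halfSystem d g i ≠ 0 := fun h =>
    halfSystem_add_ne_zero hgd i i (by rw [h, add_zero])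
  have hdvd : orderOf q ∣ 2 * g := by simpa [hdg] using ZMod.orderOf_dvd_card_sub_one hq0
  have he0 : orderOf q ≠ 0 := fun h => by simp [h] at hdvd; omega
  have he1 : orderOf q ≠ 1 := by rwa [Ne, orderOf_eq_one_iff]
  rcases Nat.even_or_odd (orderOf q) with heven | hodd
  · obtain ⟨j, hj⟩ := hS (orderOf q / 2) (by have := Nat.le_of_dvd (by omega) hdvd; omega)
    apply halfSystem_add_ne_zero hgd j i
    rw [hj, pow_orderOf_div_two_eq_neg_one heven he0]
    ring
  · have he : orderOf q = g := (hg.eq_one_or_self_of_dvd _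
      (hodd.coprime_two_right.dvd_of_dvd_mul_left hdvd)).resolve_left he1
    refine not_forall_pow_mul_mem_halfSystem hdg hg2 hu he fun l => ?_
    rw [← pow_mod_orderOf]
    exact hS _ (by have := Nat.mod_lt l (Nat.pos_of_ne_zero he0); omega)

end HalfSystemOrbits

theorem stmt16_general (p d g : ℕ) (hp : p.Prime) (hd : d.Prime)
    (hpd : p ≠ d) (hdg : d = 2 * g + 1)
    (c : ℤ → ZMod p)
    (hc : ∀ k : ℕ, c k = (((X ^ d + 1) ^ ((p - 1) / 2) : (ZMod p)[X])).coeff k)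
    (hcneg : ∀ k : ℤ, k < 0 → c k = 0)
    (H : Matrix (Fin g) (Fin g) (ZMod p))
    (hH : ∀ i j : Fin g, H i j = c (p * (i.val + 1) - (j.val + 1) : ℤ)) :
    (p ≡ 1 [MOD d] → IsUnit H) ∧
    (¬ p ≡ 1 [MOD d] → g.Prime → IsNilpotent H) := by
  have := Fact.mk hp
  have := Fact.mk hd
  have hsupp : ∀ i j, H i j ≠ 0 → halfSystem d g j = p * halfSystem d g i := fun i j hij =>
    halfSystem_eq_mul_of_dvd (int_dvd_of_ne_zero_of_eq_coeff hd.pos hc hcneg (hH i j ▸ hij))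
  refine ⟨fun h1 => ?_, fun h1 hg => ⟨g, ?_⟩⟩
  · have hp1 : (p : ZMod d) = 1 := by simpa using (ZMod.natCast_eq_natCast_iff p 1 d).2 h1
    refine Matrix.isUnit_of_isDiag (fun i j hij => ?_) (fun i => ?_)
    · by_contra hne
      have hji : halfSystem d g j = halfSystem d g i := by simpa [hp1] using hsupp i j hne
      exact hij (halfSystem_injective (by omega) hji.symm)
    · rw [hH]
      exact_mod_cast apply_mul_sub_ne_zero_of_modEq_one hdg h1 hc (k := i + 1) (by omega)
  · have hp0 : (p : ZMod d) ≠ 0 := by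
      rw [Ne, ZMod.natCast_eq_zero_iff]
      exact fun hdvd => hpd ((Nat.prime_dvd_prime_iff_eq hd hp).1 hdvd).symm
    have hp1 : (p : ZMod d) ≠ 1 := by simpa using mt (ZMod.natCast_eq_natCast_iff p 1 d).1 h1
    refine Matrix.pow_eq_zero_of_forall_exists_iterate_notMem (φ := ((p : ZMod d) * ·)) hsupp
      fun i => ?_
    simpa only [mul_left_iterate] using exists_pow_mul_halfSystem_notMem hdg hg hp0 hp1 i

theorem stmt16 (p d g : ℕ) (hp : p.Prime) (hpodd : Odd p) (hd : d.Prime)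
    (hdodd : Odd d) (hpd : p ≠ d) (hdg : d = 2 * g + 1)
    (c : ℤ → ZMod p)
    (hc : ∀ k : ℕ, c k = (((X ^ d + 1) ^ ((p - 1) / 2) : (ZMod p)[X])).coeff k)
    (hcneg : ∀ k : ℤ, k < 0 → c k = 0)
    (H : Matrix (Fin g) (Fin g) (ZMod p))
    (hH : ∀ i j : Fin g, H i j = c (p * (i.val + 1) - (j.val + 1) : ℤ)) :
    (p ≡ 1 [MOD d] → IsUnit H) ∧
    (¬ p ≡ 1 [MOD d] → g.Prime → IsNilpotent H) :=
  stmt16_general p d g hp hd hpd hdg c hc hcneg H hH
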